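/- The 5-dimensional nilpotent commutative associative algebra A₀₇ does not degenerate to A₂₁: the structure λ of A₂₁ does NOT lie in the closure of the GL(5,ℂ)-orbit O(μ) of the structure μ of A₀₇ (closure in the standard topology on the space of bilinear maps ℂ⁵ × ℂ⁵ → ℂ⁵). -/

import Mathlib

/-!
If `ν = g · μ`, then `g e₄` and `g e₅` lie in the right annihilator `{y | ∀ x, ν x y = 0}` of `ν`.
A two-dimensional annihilator meets the hyperplane `{y | y₅ = 0}` nontrivially, so the Gram matrix
of the form `(x, y) ↦ ν(x, y)₅` on `e₁, …, e₄` is singular. Its determinant is a continuous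
function of `ν`, hence it also vanishes on the closure of the orbit; for `λ` that matrix is the
antidiagonal one, of determinant `1`.
-/

open ContinuousLinearMap

/-- The underlying space `ℂⁿ`. -/
abbrev Vn (n : ℕ) := Fin n → ℂ

/-- The space of bilinear maps `ℂⁿ × ℂⁿ → ℂⁿ` (as continuous linear maps in two
arguments), carrying its standard topology as a finite-dimensional complex vector space. -/
abbrev Bil (n : ℕ) := Vn n →L[ℂ] Vn n →L[ℂ] Vn n

/-- The action of `GL(n, ℂ)` on bilinear maps: `(g · μ)(x, y) = g (μ (g⁻¹ x) (g⁻¹ y))`. -/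
noncomputable def act {n : ℕ} (g : Vn n ≃L[ℂ] Vn n) (μ : Bil n) : Bil n :=
  ((compL ℂ (Vn n) (Vn n) (Vn n)).flip (g.symm : Vn n →L[ℂ] Vn n)).comp
    (((compL ℂ (Vn n) (Vn n) (Vn n)) (g : Vn n →L[ℂ] Vn n)).comp
      (μ.comp (g.symm : Vn n →L[ℂ] Vn n)))

@[simp] lemma act_apply {n : ℕ} (g : Vn n ≃L[ℂ] Vn n) (μ : Bil n) (x y : Vn n) :
    act g μ x y = g (μ (g.symm x) (g.symm y)) := rfl

/-- The orbit `O(μ)` of a bilinear map under the `GL(n, ℂ)`-action. -/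
noncomputable def orbit {n : ℕ} (μ : Bil n) : Set (Bil n) :=
  {ν | ∃ g : Vn n ≃L[ℂ] Vn n, ν = act g μ}

/-- The standard basis `e₁, …, e₅` of `ℂ⁵` (zero-indexed: `e i` is `e_{i+1}`). -/
def e (i : Fin 5) : Vn 5 := Pi.single i 1

/-- Multiplication table of the algebra `𝐀07` (entry `(i, j)` is `eᵢ · eⱼ`). -/
def tblA07 : Fin 5 → Fin 5 → Vn 5 :=
  ![![0, e 3 + e 4, e 3, 0, 0],
   ![e 3 + e 4, 0, e 4, 0, 0],
   ![e 3, e 4, 0, 0, 0],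
   ![0, 0, 0, 0, 0],
   ![0, 0, 0, 0, 0]]

/-- Multiplication table of the algebra `𝐀21` (entry `(i, j)` is `eᵢ · eⱼ`). -/
def tblA21 : Fin 5 → Fin 5 → Vn 5 :=
  ![![0, 0, 0, e 4, 0],
   ![0, 0, e 4, 0, 0],
   ![0, e 4, 0, 0, 0],
   ![e 4, 0, 0, 0, 0],
   ![0, 0, 0, 0, 0]]

noncomputable def pairingMinor {n : ℕ} (ν : Bil (n + 1)) : Matrix (Fin n) (Fin n) ℂ :=
  Matrix.of fun i j => ν (Pi.single i.castSucc 1) (Pi.single j.castSucc 1) (Fin.last n)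

noncomputable def rightAnnihilator {n : ℕ} (ν : Bil n) : Submodule ℂ (Vn n) :=
  LinearMap.ker (ν.flip : Vn n →ₗ[ℂ] Vn n →L[ℂ] Vn n)

lemma mem_rightAnnihilator {n : ℕ} {ν : Bil n} {y : Vn n} :
    y ∈ rightAnnihilator ν ↔ ∀ x, ν x y = 0 := by
  simp [rightAnnihilator, ContinuousLinearMap.ext_iff]

lemma continuous_det_pairingMinor (n : ℕ) :
    Continuous fun ν : Bil (n + 1) => (pairingMinor ν).det :=
  Continuous.matrix_det <| continuous_matrix fun i j => by unfold pairingMinor; fun_prop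

lemma exists_ne_zero_mem_apply_last_eq_zero {K : Type*} [Field K] {n : ℕ}
    (S : Submodule K (Fin (n + 1) → K)) (hS : 2 ≤ Module.finrank K S) :
    ∃ w ∈ S, w ≠ 0 ∧ w (Fin.last n) = 0 := by
  let lastCoord : S →ₗ[K] K := (LinearMap.proj (Fin.last n)).comp S.subtype
  have hker : LinearMap.ker lastCoord ≠ ⊥ :=
    LinearMap.ker_ne_bot_of_finrank_lt (by rw [Module.finrank_self]; omega)
  obtain ⟨⟨w, hwS⟩, hwlast, hw0⟩ := Submodule.exists_mem_ne_zero_of_ne_bot hker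
  exact ⟨w, hwS, fun h => hw0 (Subtype.ext h), hwlast⟩

lemma det_pairingMinor_eq_zero {n : ℕ} (ν : Bil (n + 1))
    (hν : 2 ≤ Module.finrank ℂ (rightAnnihilator ν)) : (pairingMinor ν).det = 0 := by
  obtain ⟨w, hwν, hw0, hwlast⟩ := exists_ne_zero_mem_apply_last_eq_zero _ hν
  rw [← Matrix.exists_mulVec_eq_zero_iff]
  refine ⟨fun j => w j.castSucc, fun h => hw0 ?_, ?_⟩
  · funext j
    induction j using Fin.lastCases with
    | last => exact hwlast
    | cast j => exact congrFun h j
  · funext i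
    have hwi := congrFun (mem_rightAnnihilator.mp hwν (Pi.single i.castSucc 1)) (Fin.last n)
    rw [pi_eq_sum_univ' w] at hwi
    simpa [Fin.sum_univ_castSucc, hwlast, pairingMinor, Matrix.mulVec, dotProduct, mul_comm]
      using hwi

lemma rightAnnihilator_act {n : ℕ} (g : Vn n ≃L[ℂ] Vn n) (μ : Bil n) :
    rightAnnihilator (act g μ) = (rightAnnihilator μ).map (g : Vn n →ₗ[ℂ] Vn n) := by
  rw [Submodule.map_equiv_eq_comap_symm (g : Vn n ≃ₗ[ℂ] Vn n)]
  ext y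
  simp only [Submodule.mem_comap, mem_rightAnnihilator, act_apply]
  constructor
  · intro h x
    simpa using h (g x)
  · intro h x
    simpa using h (g.symm x)

lemma finrank_rightAnnihilator_act {n : ℕ} (g : Vn n ≃L[ℂ] Vn n) (μ : Bil n) :
    Module.finrank ℂ (rightAnnihilator (act g μ)) = Module.finrank ℂ (rightAnnihilator μ) := by
  rw [rightAnnihilator_act]
  exact LinearEquiv.finrank_map_eq (g : Vn n ≃ₗ[ℂ] Vn n) _

lemma two_le_finrank_rightAnnihilator_A07 (μ : Bil 5)
    (hμ : ∀ i j : Fin 5, μ (e i) (e j) = tblA07 i j) :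
    2 ≤ Module.finrank ℂ (rightAnnihilator μ) := by
  have hind : LinearIndependent ℂ ![e 3, e 4] := by
    convert (Pi.basisFun ℂ (Fin 5)).linearIndependent.comp ![3, 4] (by decide) using 1
    ext i : 1
    fin_cases i <;> simp [e]
  have hspan : Submodule.span ℂ (Set.range ![e 3, e 4]) ≤ rightAnnihilator μ := by
    have hμ' : ∀ i j : Fin 5, μ (Pi.single i 1) (Pi.single j 1) = tblA07 i j := hμ
    rw [Submodule.span_le, Set.range_subset_iff, Fin.forall_fin_two]
    refine ⟨mem_rightAnnihilator.mpr fun x => ?_, mem_rightAnnihilator.mpr fun x => ?_⟩ <;>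
      rw [pi_eq_sum_univ' x] <;> simp [e, Fin.sum_univ_five, hμ', tblA07]
  simpa [finrank_span_eq_card hind] using Submodule.finrank_mono hspan

lemma det_pairingMinor_A21 (lam : Bil 5)
    (hlam : ∀ i j : Fin 5, lam (e i) (e j) = tblA21 i j) : (pairingMinor lam).det = 1 := by
  have : pairingMinor lam = !![0, 0, 0, 1; 0, 0, 1, 0; 0, 1, 0, 0; 1, 0, 0, 0] := by
    ext i j
    fin_cases i <;> fin_cases j <;>
      exact (congrFun (hlam _ _) 4).trans (by simp [tblA21, e])
  rw [this]
  simp [Matrix.det_succ_row_zero, Fin.sum_univ_succ, Fin.succAbove]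
  norm_num

/-- The $5$-dimensional nilpotent commutative associative algebra `𝐀07` does not degenerate to
`𝐀21`: the structure `λ` of `𝐀21` does NOT lie in the closure of
the `GL(5, ℂ)`-orbit `O(μ)` of the structure `μ` of `𝐀07`. -/
theorem A07_not_deg_A21 (μ lam : Bil 5)
    (hμ : ∀ i j : Fin 5, μ (e i) (e j) = tblA07 i j)
    (hlam : ∀ i j : Fin 5, lam (e i) (e j) = tblA21 i j) :
    lam ∉ closure (orbit μ) := by
  have horbit : orbit μ ⊆ {ν | (pairingMinor ν).det = 0} := by
    rintro _ ⟨g, rfl⟩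
    apply det_pairingMinor_eq_zero
    rw [finrank_rightAnnihilator_act]
    exact two_le_finrank_rightAnnihilator_A07 μ hμ
  have hclosed : IsClosed {ν : Bil 5 | (pairingMinor ν).det = 0} :=
    isClosed_eq (continuous_det_pairingMinor 4) continuous_const
  intro hlam_mem
  have hdet : (pairingMinor lam).det = 0 := closure_minimal horbit hclosed hlam_mem
  rw [det_pairingMinor_A21 lam hlam] at hdet
  exact one_ne_zero hdet
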